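/- Let f, g : ℝ^p × ℝ^d → ℝ be differentiable, λ > 0, and suppose Φ := f + λ·g has L_Φ-Lipschitz gradient (L_Φ > 0) and is bounded below by Φ* ∈ ℝ. Fix 0 < α ≤ 1/L_Φ and constants L ≥ 0, L_g > 0, δ ≥ 0. Define iterates θ^{t+1} = θ^t − α·∇Φ(θ^t) with θ^t = (W^t, x^t). Suppose for every t = 0, 1, …, T−1 there exist x_t^* with ∇_x g(W^t, x_t^*) = 0 and z^t ∈ ℝ^d with ‖∇_W g(W^t, z^t)‖² ≤ δ, satisfying 4·λ²·‖∇_W g(W^t, x_t^*) − ∇_W g(W^t, z^t)‖² ≤ (1/(2α²))·‖θ^{t+1} − θ^t‖² + 2·L²·L_g²/(α²·(t+1)²). Then (1/T)·Σ_{t=0}^{T−1} ‖∇f(θ^t) + λ·(∇g(θ^t) − ∇g(W^t, x_t^*))‖² ≤ 5·(Φ(θ^0) − Φ*)/(α·T) + 4·L²·L_g²/(α²·T) + 4·λ²·δ. -/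

import Mathlib

/-!
Gradient descent on `Φ = f + λg` with step `α ≤ 1/L_Φ` decreases `Φ` by at least
`(α/2)‖∇Φ(θᵗ)‖²` per step (descent lemma), so `Σ_t ‖∇Φ(θᵗ)‖² ≤ 2(Φ(θ⁰) − Φ*)/α`.
Since `x_t^*` is stationary in `x`, `∇g(Wᵗ, x_t^*) = (∇_W g(Wᵗ, x_t^*), 0)`, so the penalized
gradient is `∇Φ(θᵗ) − λ(∇_W g(Wᵗ, x_t^*), 0)`. Splitting `∇_W g(Wᵗ, x_t^*)` through
`∇_W g(Wᵗ, zᵗ)` and using `‖a + b‖² ≤ 2‖a‖² + 2‖b‖²` twice, the correction bound gives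
`‖∇f + λ(∇g(θᵗ) − ∇g(Wᵗ, x_t^*))‖² ≤ (5/2)‖∇Φ(θᵗ)‖² + 2L²L_g²/(α²(t+1)²) + 4λ²δ`;
summing with `Σ 1/(t+1)² ≤ 2` gives the claim.
-/

open Finset RealInnerProductSpace

/-- The point `(W, x)` of the product Hilbert space `ℝ^p × ℝ^d` (with the ℓ² product
norm `‖(u,v)‖² = ‖u‖² + ‖v‖²`). -/
noncomputable def pairL2 {E F : Type*} [NormedAddCommGroup E] [NormedAddCommGroup F]
    (a : E) (b : F) : WithLp 2 (E × F) := (WithLp.equiv 2 (E × F)).symm (a, b)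

lemma norm_add_sq_le_two_mul {V : Type*} [SeminormedAddCommGroup V] (x y : V) :
    ‖x + y‖ ^ 2 ≤ 2 * ‖x‖ ^ 2 + 2 * ‖y‖ ^ 2 := by
  nlinarith [norm_add_le x y, norm_nonneg (x + y), sq_nonneg (‖x‖ - ‖y‖)]

lemma norm_sub_sq_le_two_mul {V : Type*} [SeminormedAddCommGroup V] (x y : V) :
    ‖x - y‖ ^ 2 ≤ 2 * ‖x‖ ^ 2 + 2 * ‖y‖ ^ 2 := by
  simpa only [sub_eq_add_neg, norm_neg] using norm_add_sq_le_two_mul x (-y)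

lemma sum_range_one_div_succ_sq_le_two (T : ℕ) :
    ∑ t ∈ range T, 1 / ((t : ℝ) + 1) ^ 2 ≤ 2 := by
  have h := sum_Ioo_inv_sq_le (α := ℝ) 0 (T + 1)
  rw [← Ico_add_one_left_eq_Ioo, ← sum_Ico_add' (c := 1), ← range_eq_Ico] at h
  simpa [one_div] using h

section Product

variable {E F : Type*} [NormedAddCommGroup E] [NormedAddCommGroup F]

lemma pairL2_add (a a' : E) (b b' : F) :
    pairL2 a b + pairL2 a' b' = pairL2 (a + a') (b + b') := rfl

lemma norm_pairL2_sq (a : E) (b : F) : ‖pairL2 a b‖ ^ 2 = ‖a‖ ^ 2 + ‖b‖ ^ 2 :=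
  WithLp.prod_norm_sq_eq_of_L2 _

lemma inner_pairL2 [InnerProductSpace ℝ E] [InnerProductSpace ℝ F] (a a' : E) (b b' : F) :
    ⟪pairL2 a b, pairL2 a' b'⟫ = ⟪a, a'⟫ + ⟪b, b'⟫ :=
  WithLp.prod_inner_apply _ _

section Differentiable

variable [NormedSpace ℝ E] [NormedSpace ℝ F]

lemma fderiv_comp_pairL2_left_apply {g : WithLp 2 (E × F) → ℝ} {a : E} {b : F}
    (hg : DifferentiableAt ℝ g (pairL2 a b)) (u : E) :
    fderiv ℝ (fun w => g (pairL2 w b)) a u = fderiv ℝ g (pairL2 a b) (pairL2 u 0) := by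
  have h := (WithLp.prodContinuousLinearEquiv 2 ℝ E F).symm.hasFDerivAt.comp a
    (hasFDerivAt_prodMk_left a b)
  exact DFunLike.congr_fun (hg.hasFDerivAt.comp a h).fderiv u

lemma fderiv_comp_pairL2_right_apply {g : WithLp 2 (E × F) → ℝ} {a : E} {b : F}
    (hg : DifferentiableAt ℝ g (pairL2 a b)) (w : F) :
    fderiv ℝ (fun y => g (pairL2 a y)) b w = fderiv ℝ g (pairL2 a b) (pairL2 0 w) := by
  have h := (WithLp.prodContinuousLinearEquiv 2 ℝ E F).symm.hasFDerivAt.comp b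
    (hasFDerivAt_prodMk_right a b)
  exact DFunLike.congr_fun (hg.hasFDerivAt.comp b h).fderiv w

end Differentiable

lemma gradient_pairL2 [InnerProductSpace ℝ E] [InnerProductSpace ℝ F] [CompleteSpace E]
    [CompleteSpace F] {g : WithLp 2 (E × F) → ℝ} {a : E} {b : F}
    (hg : DifferentiableAt ℝ g (pairL2 a b)) :
    gradient g (pairL2 a b) =
      pairL2 (gradient (fun w => g (pairL2 w b)) a) (gradient (fun y => g (pairL2 a y)) b) := by
  refine ext_inner_right ℝ fun v => ?_
  obtain ⟨⟨u, w⟩, rfl⟩ := (WithLp.equiv 2 (E × F)).symm.surjective v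
  change ⟪_, pairL2 u w⟫ = ⟪pairL2 _ _, pairL2 u w⟫
  rw [inner_pairL2, inner_gradient_left, inner_gradient_left, inner_gradient_left,
    fderiv_comp_pairL2_left_apply hg, fderiv_comp_pairL2_right_apply hg, ← map_add,
    pairL2_add, add_zero, zero_add]

end Product

section Descent

variable {H : Type*} [NormedAddCommGroup H] [InnerProductSpace ℝ H] [CompleteSpace H]

lemma gradient_add_const_mul {f g : H → ℝ} {x : H} (hf : DifferentiableAt ℝ f x)
    (hg : DifferentiableAt ℝ g x) (c : ℝ) :
    gradient (fun θ => f θ + c * g θ) x = gradient f x + c • gradient g x := by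
  have h : HasFDerivAt (fun θ => f θ + c * g θ) _ x :=
    hf.hasFDerivAt.add (hg.hasFDerivAt.const_mul c)
  rw [h.hasGradientAt.gradient, map_add, map_smul]
  rfl

/-- The descent lemma. -/
lemma apply_le_add_inner_gradient_add_norm_sq {Φ : H → ℝ} (hΦ : Differentiable ℝ Φ) {C : ℝ}
    (hLip : ∀ a b, ‖gradient Φ a - gradient Φ b‖ ≤ C * ‖a - b‖) (x y : H) :
    Φ y ≤ Φ x + ⟪gradient Φ x, y - x⟫ + C / 2 * ‖y - x‖ ^ 2 := by
  set v := y - x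
  -- `ψ` is antitone on `[0, 1]` because its derivative is `⟪∇Φ(x + sv) − ∇Φ(x), v⟫ − Cs‖v‖² ≤ 0`.
  set ψ : ℝ → ℝ := fun s => Φ (x + s • v) - s * ⟪gradient Φ x, v⟫ - C * ‖v‖ ^ 2 / 2 * s ^ 2
  have hψ : ∀ s : ℝ, HasDerivAt ψ
      (⟪gradient Φ (x + s • v), v⟫ - ⟪gradient Φ x, v⟫ - C * ‖v‖ ^ 2 * s) s := by
    intro s
    have hline : HasDerivAt (fun s : ℝ => x + s • v) v s := by
      simpa using ((hasDerivAt_id s).smul_const v).const_add x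
    have hΦline := (hΦ (x + s • v)).hasGradientAt.hasFDerivAt.comp_hasDerivAt s hline
    rw [InnerProductSpace.toDual_apply_apply] at hΦline
    have hlin : HasDerivAt (fun s : ℝ => s * ⟪gradient Φ x, v⟫) ⟪gradient Φ x, v⟫ s := by
      simpa using hasDerivAt_mul_const (x := s) ⟪gradient Φ x, v⟫
    have hquad := (hasDerivAt_pow 2 s).const_mul (C * ‖v‖ ^ 2 / 2)
    exact ((hΦline.sub hlin).sub hquad).congr_deriv (by push_cast; ring)
  have hanti : AntitoneOn ψ (Set.Icc 0 1) := by
    refine antitoneOn_of_deriv_nonpos (convex_Icc 0 1)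
      (fun s _ => (hψ s).continuousAt.continuousWithinAt)
      (fun s _ => (hψ s).differentiableAt.differentiableWithinAt) fun s hs => ?_
    rw [interior_Icc] at hs
    have hlip : ‖gradient Φ (x + s • v) - gradient Φ x‖ ≤ C * (s * ‖v‖) := by
      simpa [norm_smul, abs_of_pos hs.1] using hLip (x + s • v) x
    have hcs := real_inner_le_norm (gradient Φ (x + s • v) - gradient Φ x) v
    rw [inner_sub_left] at hcs
    rw [(hψ s).deriv]
    nlinarith [norm_nonneg v]
  have h01 : ψ 1 ≤ ψ 0 := hanti (by norm_num) (by norm_num) zero_le_one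
  simp only [ψ, one_smul, zero_smul, add_zero, v, add_sub_cancel] at h01
  linarith

lemma apply_sub_smul_gradient_le {Φ : H → ℝ} (hΦ : Differentiable ℝ Φ) {C α : ℝ}
    (hLip : ∀ a b, ‖gradient Φ a - gradient Φ b‖ ≤ C * ‖a - b‖) (hα0 : 0 ≤ α) (hαC : α * C ≤ 1)
    (x : H) :
    Φ (x - α • gradient Φ x) ≤ Φ x - α / 2 * ‖gradient Φ x‖ ^ 2 := by
  have h := apply_le_add_inner_gradient_add_norm_sq hΦ hLip x (x - α • gradient Φ x)
  rw [sub_sub_cancel_left, inner_neg_right, real_inner_smul_right, real_inner_self_eq_norm_sq,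
    norm_neg, norm_smul, Real.norm_of_nonneg hα0] at h
  nlinarith [mul_nonneg (mul_nonneg hα0 (sub_nonneg.mpr hαC)) (sq_nonneg ‖gradient Φ x‖)]

lemma sum_norm_sq_gradient_le_of_gradient_descent {Φ : H → ℝ} (hΦ : Differentiable ℝ Φ)
    {C α Φstar : ℝ} (hLip : ∀ a b, ‖gradient Φ a - gradient Φ b‖ ≤ C * ‖a - b‖)
    (hbdd : ∀ θ, Φstar ≤ Φ θ) (hα0 : 0 < α) (hαC : α * C ≤ 1)
    {θ : ℕ → H} (hupd : ∀ t, θ (t + 1) = θ t - α • gradient Φ (θ t)) (T : ℕ) :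
    ∑ t ∈ range T, ‖gradient Φ (θ t)‖ ^ 2 ≤ 2 / α * (Φ (θ 0) - Φstar) := by
  have hstep : ∀ t, ‖gradient Φ (θ t)‖ ^ 2 ≤ 2 / α * (Φ (θ t) - Φ (θ (t + 1))) := by
    intro t
    have h := apply_sub_smul_gradient_le hΦ hLip hα0.le hαC (θ t)
    rw [← hupd t] at h
    rw [div_mul_eq_mul_div, le_div_iff₀ hα0]
    linarith
  calc ∑ t ∈ range T, ‖gradient Φ (θ t)‖ ^ 2
      ≤ ∑ t ∈ range T, 2 / α * (Φ (θ t) - Φ (θ (t + 1))) := sum_le_sum fun t _ => hstep t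
    _ = 2 / α * (Φ (θ 0) - Φ (θ T)) := by rw [← mul_sum, sum_range_sub' (fun t => Φ (θ t))]
    _ ≤ 2 / α * (Φ (θ 0) - Φstar) := by gcongr; exact hbdd _

end Descent

section Penalty

variable {E F : Type*} [NormedAddCommGroup E] [InnerProductSpace ℝ E] [CompleteSpace E]
  [NormedAddCommGroup F] [InnerProductSpace ℝ F] [CompleteSpace F]

lemma norm_sq_penalized_gradient_le {f g Φ : WithLp 2 (E × F) → ℝ}
    (hf : Differentiable ℝ f) (hg : Differentiable ℝ g) {lam α c δ : ℝ} (hα : α ≠ 0)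
    (hΦ : ∀ θ, Φ θ = f θ + lam * g θ) {θ θ' : WithLp 2 (E × F)}
    (hθ' : θ' = θ - α • gradient Φ θ) {a : E} {xs z : F}
    (hstat : gradient (fun y => g (pairL2 a y)) xs = 0)
    (hz : ‖gradient (fun w => g (pairL2 w z)) a‖ ^ 2 ≤ δ)
    (hcorr : 4 * lam ^ 2 *
        ‖gradient (fun w => g (pairL2 w xs)) a - gradient (fun w => g (pairL2 w z)) a‖ ^ 2 ≤
      1 / (2 * α ^ 2) * ‖θ' - θ‖ ^ 2 + c) :
    ‖gradient f θ + lam • (gradient g θ - gradient g (pairL2 a xs))‖ ^ 2 ≤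
      5 / 2 * ‖gradient Φ θ‖ ^ 2 + c + 4 * lam ^ 2 * δ := by
  set gx := gradient (fun w => g (pairL2 w xs)) a
  set gz := gradient (fun w => g (pairL2 w z)) a
  have hgradΦ : gradient Φ θ = gradient f θ + lam • gradient g θ := by
    rw [show Φ = _ from funext hΦ, gradient_add_const_mul (hf θ) (hg θ)]
  have hpenalized : gradient f θ + lam • (gradient g θ - gradient g (pairL2 a xs)) =
      gradient Φ θ - lam • pairL2 gx (0 : F) := by
    rw [gradient_pairL2 (hg _), hstat, hgradΦ, smul_sub, add_sub_assoc]
  have hstep : 1 / (2 * α ^ 2) * ‖θ' - θ‖ ^ 2 = ‖gradient Φ θ‖ ^ 2 / 2 := by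
    rw [hθ', sub_sub_cancel_left, norm_neg, norm_smul, mul_pow, Real.norm_eq_abs, sq_abs]
    field_simp
  have hgx : ‖gx‖ ^ 2 ≤ 2 * ‖gx - gz‖ ^ 2 + 2 * ‖gz‖ ^ 2 := by
    simpa using norm_add_sq_le_two_mul (gx - gz) gz
  rw [hpenalized]
  calc ‖gradient Φ θ - lam • pairL2 gx (0 : F)‖ ^ 2
      ≤ 2 * ‖gradient Φ θ‖ ^ 2 + 2 * ‖lam • pairL2 gx (0 : F)‖ ^ 2 := norm_sub_sq_le_two_mul _ _
    _ = 2 * ‖gradient Φ θ‖ ^ 2 + 2 * lam ^ 2 * ‖gx‖ ^ 2 := by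
        rw [norm_smul, mul_pow, norm_pairL2_sq, Real.norm_eq_abs, sq_abs, norm_zero]
        ring
    _ ≤ 5 / 2 * ‖gradient Φ θ‖ ^ 2 + c + 4 * lam ^ 2 * δ := by
        nlinarith [mul_le_mul_of_nonneg_left hgx (sq_nonneg lam),
          mul_le_mul_of_nonneg_left hz (sq_nonneg lam)]

end Penalty

theorem single_loop_ldc_mtl_convergence_general (p d : ℕ)
    (f g : WithLp 2 (EuclideanSpace ℝ (Fin p) × EuclideanSpace ℝ (Fin d)) → ℝ)
    (hf : Differentiable ℝ f) (hg : Differentiable ℝ g)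
    (lam : ℝ)
    (Φ : WithLp 2 (EuclideanSpace ℝ (Fin p) × EuclideanSpace ℝ (Fin d)) → ℝ)
    (hΦdef : ∀ θ, Φ θ = f θ + lam * g θ)
    (LΦ : ℝ) (hLΦ : 0 < LΦ)
    (hLip : ∀ θ θ', ‖gradient Φ θ - gradient Φ θ'‖ ≤ LΦ * ‖θ - θ'‖)
    (Φstar : ℝ) (hbdd : ∀ θ, Φstar ≤ Φ θ)
    (α : ℝ) (hα0 : 0 < α) (hα1 : α ≤ 1 / LΦ)
    (L : ℝ) (Lg : ℝ) (δ : ℝ)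
    (W : ℕ → EuclideanSpace ℝ (Fin p)) (X : ℕ → EuclideanSpace ℝ (Fin d))
    (hupd : ∀ t, pairL2 (W (t + 1)) (X (t + 1)) =
        pairL2 (W t) (X t) - α • gradient Φ (pairL2 (W t) (X t)))
    (T : ℕ) (hT : 1 ≤ T)
    (xstar : ℕ → EuclideanSpace ℝ (Fin d)) (z : ℕ → EuclideanSpace ℝ (Fin d))
    (hstat : ∀ t < T, gradient (fun y => g (pairL2 (W t) y)) (xstar t) = 0)
    (hz : ∀ t < T, ‖gradient (fun W' => g (pairL2 W' (z t))) (W t)‖ ^ 2 ≤ δ)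
    (hcorr : ∀ t < T, 4 * lam ^ 2 *
          ‖gradient (fun W' => g (pairL2 W' (xstar t))) (W t) -
            gradient (fun W' => g (pairL2 W' (z t))) (W t)‖ ^ 2 ≤
        (1 / (2 * α ^ 2)) * ‖pairL2 (W (t + 1)) (X (t + 1)) - pairL2 (W t) (X t)‖ ^ 2 +
          2 * L ^ 2 * Lg ^ 2 / (α ^ 2 * ((t : ℝ) + 1) ^ 2)) :
    (1 / (T : ℝ)) * ∑ t ∈ Finset.range T,
        ‖gradient f (pairL2 (W t) (X t)) +
          lam • (gradient g (pairL2 (W t) (X t)) -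
            gradient g (pairL2 (W t) (xstar t)))‖ ^ 2
      ≤ 5 * (Φ (pairL2 (W 0) (X 0)) - Φstar) / (α * T)
        + 4 * L ^ 2 * Lg ^ 2 / (α ^ 2 * T) + 4 * lam ^ 2 * δ := by
  set θ : ℕ → _ := fun t => pairL2 (W t) (X t)
  set C := 2 * L ^ 2 * Lg ^ 2 / α ^ 2
  have hΦ : Differentiable ℝ Φ := funext hΦdef ▸ hf.add (hg.const_mul lam)
  have hαL : α * LΦ ≤ 1 := (le_div_iff₀ hLΦ).mp hα1
  have hdescent :=
    sum_norm_sq_gradient_le_of_gradient_descent hΦ hLip hbdd hα0 hαL (θ := θ) hupd T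
  have hiter : ∀ t ∈ range T,
      ‖gradient f (θ t) + lam • (gradient g (θ t) - gradient g (pairL2 (W t) (xstar t)))‖ ^ 2 ≤
        5 / 2 * ‖gradient Φ (θ t)‖ ^ 2 + C * (1 / ((t : ℝ) + 1) ^ 2) + 4 * lam ^ 2 * δ := by
    intro t ht
    have ht := mem_range.mp ht
    rw [mul_one_div, div_div]
    exact norm_sq_penalized_gradient_le hf hg hα0.ne' hΦdef (hupd t) (hstat t ht) (hz t ht)
      (hcorr t ht)
  have hsum := sum_le_sum hiter
  rw [sum_add_distrib, sum_add_distrib, ← mul_sum, ← mul_sum, sum_const, card_range,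
    nsmul_eq_mul] at hsum
  have hT0 : (0 : ℝ) < T := by exact_mod_cast hT
  calc (1 / (T : ℝ)) * ∑ t ∈ range T,
        ‖gradient f (θ t) + lam • (gradient g (θ t) - gradient g (pairL2 (W t) (xstar t)))‖ ^ 2
      ≤ 1 / T * (5 / 2 * (2 / α * (Φ (θ 0) - Φstar)) + C * 2 + T * (4 * lam ^ 2 * δ)) := by
        grw [hsum, hdescent, sum_range_one_div_succ_sq_le_two T]
    _ = 5 * (Φ (θ 0) - Φstar) / (α * T) + 4 * L ^ 2 * Lg ^ 2 / (α ^ 2 * T) + 4 * lam ^ 2 * δ := by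
        simp only [C]
        field_simp
        ring

/-- Convergence of the single-loop LDC-MTL iteration: with `Φ = f + λg`
lower bounded with `L_Φ`-Lipschitz gradient, step `0 < α ≤ 1/L_Φ`, iterates
`θ^{t+1} = θᵗ − α∇Φ(θᵗ)`, stationary points `x_t^*` of `g(Wᵗ, ·)`, approximations `zᵗ`
with `‖∇_W g(Wᵗ, zᵗ)‖² ≤ δ`, and the per-step correction-error bound, one gets
`(1/T) Σ_{t<T} ‖∇f(θᵗ) + λ(∇g(θᵗ) − ∇g(Wᵗ, x_t^*))‖²
  ≤ 5(Φ(θ⁰) − Φ*)/(αT) + 4L²L_g²/(α²T) + 4λ²δ`. -/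
theorem single_loop_ldc_mtl_convergence (p d : ℕ)
    (f g : WithLp 2 (EuclideanSpace ℝ (Fin p) × EuclideanSpace ℝ (Fin d)) → ℝ)
    (hf : Differentiable ℝ f) (hg : Differentiable ℝ g)
    (lam : ℝ) (hlam : 0 < lam)
    (Φ : WithLp 2 (EuclideanSpace ℝ (Fin p) × EuclideanSpace ℝ (Fin d)) → ℝ)
    (hΦdef : ∀ θ, Φ θ = f θ + lam * g θ)
    (LΦ : ℝ) (hLΦ : 0 < LΦ)
    (hLip : ∀ θ θ', ‖gradient Φ θ - gradient Φ θ'‖ ≤ LΦ * ‖θ - θ'‖)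
    (Φstar : ℝ) (hbdd : ∀ θ, Φstar ≤ Φ θ)
    (α : ℝ) (hα0 : 0 < α) (hα1 : α ≤ 1 / LΦ)
    (L : ℝ) (hL : 0 ≤ L) (Lg : ℝ) (hLg : 0 < Lg) (δ : ℝ) (hδ : 0 ≤ δ)
    (W : ℕ → EuclideanSpace ℝ (Fin p)) (X : ℕ → EuclideanSpace ℝ (Fin d))
    (hupd : ∀ t, pairL2 (W (t + 1)) (X (t + 1)) =
        pairL2 (W t) (X t) - α • gradient Φ (pairL2 (W t) (X t)))
    (T : ℕ) (hT : 1 ≤ T)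
    (xstar : ℕ → EuclideanSpace ℝ (Fin d)) (z : ℕ → EuclideanSpace ℝ (Fin d))
    (hstat : ∀ t < T, gradient (fun y => g (pairL2 (W t) y)) (xstar t) = 0)
    (hz : ∀ t < T, ‖gradient (fun W' => g (pairL2 W' (z t))) (W t)‖ ^ 2 ≤ δ)
    (hcorr : ∀ t < T, 4 * lam ^ 2 *
          ‖gradient (fun W' => g (pairL2 W' (xstar t))) (W t) -
            gradient (fun W' => g (pairL2 W' (z t))) (W t)‖ ^ 2 ≤
        (1 / (2 * α ^ 2)) * ‖pairL2 (W (t + 1)) (X (t + 1)) - pairL2 (W t) (X t)‖ ^ 2 +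
          2 * L ^ 2 * Lg ^ 2 / (α ^ 2 * ((t : ℝ) + 1) ^ 2)) :
    (1 / (T : ℝ)) * ∑ t ∈ Finset.range T,
        ‖gradient f (pairL2 (W t) (X t)) +
          lam • (gradient g (pairL2 (W t) (X t)) -
            gradient g (pairL2 (W t) (xstar t)))‖ ^ 2
      ≤ 5 * (Φ (pairL2 (W 0) (X 0)) - Φstar) / (α * T)
        + 4 * L ^ 2 * Lg ^ 2 / (α ^ 2 * T) + 4 * lam ^ 2 * δ :=
  single_loop_ldc_mtl_convergence_general p d f g hf hg lam Φ hΦdef LΦ hLΦ hLip Φstar hbdd α hα0 hα1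
    L Lg δ W X hupd T hT xstar z hstat hz hcorr
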